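/- arXiv:2412.17017 — 2 statements merged into one kernel-verified Lean document; each statement's English description precedes it below -/
import Mathlib

section
/- For r ≥ 0 set a₀ = 1, a₁ = 4r²+6, a₂ = 3r⁴+23r²+5, a₃ = 11r⁴+28r², a₄ = 3r⁶+19r⁴+10r², a₅ = r⁶+5r⁴, and define the Hurwitz determinants A₁ = a₁, A₂ = det [[a₁, a₀],[a₃, a₂]], A₃ = det [[a₁, a₀, 0],[a₃, a₂, a₁],[a₅, a₄, a₃]], A₄ = det [[a₁, a₀, 0, 0],[a₃, a₂, a₁, 0],[a₅, a₄, a₃, 0],[0, 0, a₅, a₄]]. Then A₁ = 4r²+6, A₂ = 12r⁶+99r⁴+130r²+30, A₃ = 84r¹⁰+981r⁸+3048r⁶+2836r⁴+480r², A₄ = 252r¹⁶+4539r¹⁴+28623r¹²+76230r¹⁰+85804r⁸+37480r⁶+4800r⁴; in particular A₁ > 0 for all r ≥ 0, and A₂, A₃, A₄ > 0 for all r > 0. -/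
/-! The 2×2 and 3×3 determinants are expanded directly. The last column of the `A₄` matrix is
`(0, 0, 0, a₄)`, so `A₄ = a₄ · A₃`; hence `A₄` has the stated expansion and is positive
wherever `A₃` is. -/

noncomputable section

/-- `a₀ = 1`. -/
def a0 (_r : ℝ) : ℝ := 1
/-- `a₁ = 4r² + 6`. -/
def a1 (r : ℝ) : ℝ := 4*r^2 + 6
/-- `a₂ = 3r⁴ + 23r² + 5`. -/
def a2 (r : ℝ) : ℝ := 3*r^4 + 23*r^2 + 5
/-- `a₃ = 11r⁴ + 28r²`. -/
def a3 (r : ℝ) : ℝ := 11*r^4 + 28*r^2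
/-- `a₄ = 3r⁶ + 19r⁴ + 10r²`. -/
def a4 (r : ℝ) : ℝ := 3*r^6 + 19*r^4 + 10*r^2
/-- `a₅ = r⁶ + 5r⁴`. -/
def a5 (r : ℝ) : ℝ := r^6 + 5*r^4

/-- First Hurwitz determinant. -/
def A1 (r : ℝ) : ℝ := a1 r
/-- Second Hurwitz determinant. -/
def A2 (r : ℝ) : ℝ := (!![a1 r, a0 r; a3 r, a2 r]).det
/-- Third Hurwitz determinant. -/
def A3 (r : ℝ) : ℝ := (!![a1 r, a0 r, 0; a3 r, a2 r, a1 r; a5 r, a4 r, a3 r]).det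
/-- Fourth Hurwitz determinant. -/
def A4 (r : ℝ) : ℝ :=
  (!![a1 r, a0 r, 0,    0;
      a3 r, a2 r, a1 r, 0;
      a5 r, a4 r, a3 r, 0;
      0,    0,    a5 r, a4 r]).det

theorem Matrix.det_succ_column_last_of_eq_zero {R : Type*} [CommRing R] {n : ℕ}
    (A : Matrix (Fin (n + 1)) (Fin (n + 1)) R)
    (hA : ∀ i : Fin n, A i.castSucc (Fin.last n) = 0) :
    A.det = A (Fin.last n) (Fin.last n) * (A.submatrix Fin.castSucc Fin.castSucc).det := by
  rw [Matrix.det_succ_column A (Fin.last n), Fin.sum_univ_castSucc]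
  simp [hA, Fin.succAbove_last, ← two_mul, pow_mul]

theorem A2_eq (r : ℝ) : A2 r = 12*r^6 + 99*r^4 + 130*r^2 + 30 := by
  simp only [A2, Matrix.det_fin_two_of, a0, a1, a2, a3]
  ring

theorem A3_eq (r : ℝ) : A3 r = 84*r^10 + 981*r^8 + 3048*r^6 + 2836*r^4 + 480*r^2 := by
  rw [A3, Matrix.det_fin_three]
  simp only [Matrix.of_apply, Matrix.cons_val', Matrix.cons_val_zero, Matrix.cons_val_one,
    Matrix.cons_val, Matrix.cons_val_fin_one, a0, a1, a2, a3, a4, a5]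
  ring

theorem A4_eq_a4_mul_A3 (r : ℝ) : A4 r = a4 r * A3 r := by
  rw [A4, Matrix.det_succ_column_last_of_eq_zero _ fun i => by fin_cases i <;> rfl, A3]
  congr 1

/-- **Hurwitz determinants of the characteristic quintic** (proof of Lemma 3.3):
explicit values of `A₁, A₂, A₃, A₄`, and their positivity. -/
theorem hurwitz_determinants (r : ℝ) :
    A1 r = 4*r^2 + 6 ∧
    A2 r = 12*r^6 + 99*r^4 + 130*r^2 + 30 ∧
    A3 r = 84*r^10 + 981*r^8 + 3048*r^6 + 2836*r^4 + 480*r^2 ∧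
    A4 r = 252*r^16 + 4539*r^14 + 28623*r^12 + 76230*r^10 + 85804*r^8
            + 37480*r^6 + 4800*r^4 ∧
    (0 ≤ r → 0 < A1 r) ∧
    (0 < r → 0 < A2 r ∧ 0 < A3 r ∧ 0 < A4 r) := by
  have hA4 : A4 r = 252*r^16 + 4539*r^14 + 28623*r^12 + 76230*r^10 + 85804*r^8
      + 37480*r^6 + 4800*r^4 := by
    rw [A4_eq_a4_mul_A3, A3_eq, a4]
    ring
  have hA3 : 0 < r → 0 < A3 r := fun _ => by rw [A3_eq]; positivity
  refine ⟨rfl, A2_eq r, A3_eq r, hA4, fun _ => by rw [A1, a1]; positivity, fun hr => ⟨?_, hA3 hr, ?_⟩⟩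
  · rw [A2_eq]; positivity
  · rw [A4_eq_a4_mul_A3]
    exact mul_pos (by rw [a4]; positivity) (hA3 hr)
end
end

section
/- Let 0 < r₀ ≤ R₀. Then there exists a constant c₀ > 0 such that for every r with r₀ ≤ r ≤ R₀ and every complex number y with y⁵ + (4r²+6)y⁴ + (3r⁴+23r²+5)y³ + (11r⁴+28r²)y² + (3r⁶+19r⁴+10r²)y + (r⁶+5r⁴) = 0, one has Re(y) ≤ −c₀. Equivalently, every eigenvalue y of B(r) (over ℂ) satisfies Re(y) ≤ −c₀. -/
noncomputable section

set_option maxHeartbeats 4000000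
set_option maxRecDepth 8000

/-- The matrix `𝒜(ξ)` of the linearized NSF–P1 system at a frequency of
modulus `r = |ξ|`. -/
def Amat (r : ℝ) : Matrix (Fin 5) (Fin 5) ℝ :=
  !![0,  r,     0,     0,  0;
     -r, 3*r^2, -r,    0,  -1;
     0,  r,     r^2+4, -1, 0;
     0,  0,     -4,    1,  r;
     0,  0,     0,     -r, 1]

/-- `ℬ(ξ) = −𝒜(ξ)`. -/
def Bmat (r : ℝ) : Matrix (Fin 5) (Fin 5) ℝ := -Amat r

private lemma real_elim (r x t : ℝ) (hr : 0 < r) (hx : 0 ≤ x)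
    (hRE : x^5-10*x^3*t^2+5*x*t^4 + (4*r^2+6)*(x^4-6*x^2*t^2+t^4) + (3*r^4+23*r^2+5)*(x^3-3*x*t^2) + (11*r^4+28*r^2)*(x^2-t^2) + (3*r^6+19*r^4+10*r^2)*x + (r^6+5*r^4) = 0)
    (hQ : 5*x^4-10*x^2*t^2+t^4 + (4*r^2+6)*(4*x^3-4*x*t^2) + (3*r^4+23*r^2+5)*(3*x^2-t^2) + (11*r^4+28*r^2)*(2*x) + (3*r^6+19*r^4+10*r^2) = 0) : False := by
  have hF : (-4050)*x^0*r^4 + (-30930)*x^0*r^6 + (-67394)*x^0*r^8 + (-59634)*x^0*r^10 + (-23184)*x^0*r^12 + (-3798)*x^0*r^14 + (-216)*x^0*r^16 + (-3000)*x^1*r^2 + (-70090)*x^1*r^4 + (-322590)*x^1*r^6 + (-465886)*x^1*r^8 + (-277638)*x^1*r^10 + (-70788)*x^1*r^12 + (-7218)*x^1*r^14 + (-216)*x^1*r^16 + (-41800)*x^2*r^2 + (-464996)*x^2*r^4 + (-1288188)*x^2*r^6 + (-1250308)*x^2*r^8 + (-489596)*x^2*r^10 + (-76632)*x^2*r^12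 + (-3852)*x^2*r^14 + (-6000)*x^3*r^0 + (-253680)*x^3*r^2 + (-1488088)*x^3*r^4 + (-2563808)*x^3*r^6 + (-1657256)*x^3*r^8 + (-420672)*x^3*r^10 + (-38856)*x^3*r^12 + (-864)*x^3*r^14 + (-45200)*x^4*r^0 + (-743696)*x^4*r^2 + (-2494368)*x^4*r^4 + (-2731280)*x^4*r^6 + (-1126576)*x^4*r^8 + (-170032)*x^4*r^10 + (-7344)*x^4*r^12 + (-132480)*x^5*r^0 + (-1129088)*x^5*r^2 + (-2271648)*x^5*r^4 + (-1541664)*x^5*r^6 + (-368960)*x^5*r^8 + (-25344)*x^5*r^10 + (-191424)*x^6*r^0 + (-921600)*x^6*r^2 + (-1114624)*x^6*r^4 + (-430400)*x^6*r^6 + (-45760)*x^6*r^8 + (-145152)*x^7*r^0 + (-406784)*x^7*r^2 + (-275584)*x^7*r^4 + (-46592)*x^7*r^6 + (-59136)*x^8*r^0 + (-91392)*x^8*r^2 + (-26880)*x^8*r^4 + (-12288)*x^9*r^0 + (-8192)*x^9*r^2 + (-1024)*x^10*r^0 = 0 := by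
    linear_combination ((40*x^3 + 24*(4*r^2+6)*x^2 + (2*(3*r^4+23*r^2+5)+4*(4*r^2+6)^2)*x + ((3*r^4+23*r^2+5)*(4*r^2+6)-(11*r^4+28*r^2)))^2 + (5*x+(4*r^2+6))*((40*x^3 + 24*(4*r^2+6)*x^2 + (2*(3*r^4+23*r^2+5)+4*(4*r^2+6)^2)*x + ((3*r^4+23*r^2+5)*(4*r^2+6)-(11*r^4+28*r^2)))*t^2 - (-(24*x^5) - 24*(4*r^2+6)*x^4 - (14*(3*r^4+23*r^2+5)+4*(4*r^2+6)^2)*x^3 - (9*(11*r^4+28*r^2)+3*(3*r^4+23*r^2+5)*(4*r^2+6))*x^2 - (4*(3*r^6+19*r^4+10*r^2)+2*(11*r^4+28*r^2)*(4*r^2+6))*x + ((r^6+5*r^4) - (3*r^6+19*r^4+10*r^2)*(4*r^2+6))) - (10*x^2+4*(4*r^2+6)*x+(3*r^4+23*r^2+5))*(40*x^3 + 24*(4*r^2+6)*x^2 + (2*(3*r^4+23*r^2+5)+4*(4*r^2+6)^2)*x + ((3*r^4+23*r^2+5)*(4*r^2+6)-(11*r^4+28*r^2))))) * hQ - ((40*x^3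 + 24*(4*r^2+6)*x^2 + (2*(3*r^4+23*r^2+5)+4*(4*r^2+6)^2)*x + ((3*r^4+23*r^2+5)*(4*r^2+6)-(11*r^4+28*r^2)))*t^2 - (-(24*x^5) - 24*(4*r^2+6)*x^4 - (14*(3*r^4+23*r^2+5)+4*(4*r^2+6)^2)*x^3 - (9*(11*r^4+28*r^2)+3*(3*r^4+23*r^2+5)*(4*r^2+6))*x^2 - (4*(3*r^6+19*r^4+10*r^2)+2*(11*r^4+28*r^2)*(4*r^2+6))*x + ((r^6+5*r^4) - (3*r^6+19*r^4+10*r^2)*(4*r^2+6))) - (10*x^2+4*(4*r^2+6)*x+(3*r^4+23*r^2+5))*(40*x^3 + 24*(4*r^2+6)*x^2 + (2*(3*r^4+23*r^2+5)+4*(4*r^2+6)^2)*x + ((3*r^4+23*r^2+5)*(4*r^2+6)-(11*r^4+28*r^2)))) * hRE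
  have g0 : (0:ℝ) < 4050*x^0*r^4 := by
    have h4 := pow_pos hr 4
    nlinarith [h4]
  have g1 : (0:ℝ) ≤ (30930)*x^0*r^6 := mul_nonneg (mul_nonneg (by norm_num) (pow_nonneg hx 0)) (pow_nonneg hr.le 6)
  have g2 : (0:ℝ) ≤ (67394)*x^0*r^8 := mul_nonneg (mul_nonneg (by norm_num) (pow_nonneg hx 0)) (pow_nonneg hr.le 8)
  have g3 : (0:ℝ) ≤ (59634)*x^0*r^10 := mul_nonneg (mul_nonneg (by norm_num) (pow_nonneg hx 0)) (pow_nonneg hr.le 10)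
  have g4 : (0:ℝ) ≤ (23184)*x^0*r^12 := mul_nonneg (mul_nonneg (by norm_num) (pow_nonneg hx 0)) (pow_nonneg hr.le 12)
  have g5 : (0:ℝ) ≤ (3798)*x^0*r^14 := mul_nonneg (mul_nonneg (by norm_num) (pow_nonneg hx 0)) (pow_nonneg hr.le 14)
  have g6 : (0:ℝ) ≤ (216)*x^0*r^16 := mul_nonneg (mul_nonneg (by norm_num) (pow_nonneg hx 0)) (pow_nonneg hr.le 16)
  have g7 : (0:ℝ) ≤ (3000)*x^1*r^2 := mul_nonneg (mul_nonneg (by norm_num) (pow_nonneg hx 1)) (pow_nonneg hr.le 2)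
  have g8 : (0:ℝ) ≤ (70090)*x^1*r^4 := mul_nonneg (mul_nonneg (by norm_num) (pow_nonneg hx 1)) (pow_nonneg hr.le 4)
  have g9 : (0:ℝ) ≤ (322590)*x^1*r^6 := mul_nonneg (mul_nonneg (by norm_num) (pow_nonneg hx 1)) (pow_nonneg hr.le 6)
  have g10 : (0:ℝ) ≤ (465886)*x^1*r^8 := mul_nonneg (mul_nonneg (by norm_num) (pow_nonneg hx 1)) (pow_nonneg hr.le 8)
  have g11 : (0:ℝ) ≤ (277638)*x^1*r^10 := mul_nonneg (mul_nonneg (by norm_num) (pow_nonneg hx 1)) (pow_nonneg hr.le 10)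
  have g12 : (0:ℝ) ≤ (70788)*x^1*r^12 := mul_nonneg (mul_nonneg (by norm_num) (pow_nonneg hx 1)) (pow_nonneg hr.le 12)
  have g13 : (0:ℝ) ≤ (7218)*x^1*r^14 := mul_nonneg (mul_nonneg (by norm_num) (pow_nonneg hx 1)) (pow_nonneg hr.le 14)
  have g14 : (0:ℝ) ≤ (216)*x^1*r^16 := mul_nonneg (mul_nonneg (by norm_num) (pow_nonneg hx 1)) (pow_nonneg hr.le 16)
  have g15 : (0:ℝ) ≤ (41800)*x^2*r^2 := mul_nonneg (mul_nonneg (by norm_num) (pow_nonneg hx 2)) (pow_nonneg hr.le 2)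
  have g16 : (0:ℝ) ≤ (464996)*x^2*r^4 := mul_nonneg (mul_nonneg (by norm_num) (pow_nonneg hx 2)) (pow_nonneg hr.le 4)
  have g17 : (0:ℝ) ≤ (1288188)*x^2*r^6 := mul_nonneg (mul_nonneg (by norm_num) (pow_nonneg hx 2)) (pow_nonneg hr.le 6)
  have g18 : (0:ℝ) ≤ (1250308)*x^2*r^8 := mul_nonneg (mul_nonneg (by norm_num) (pow_nonneg hx 2)) (pow_nonneg hr.le 8)
  have g19 : (0:ℝ) ≤ (489596)*x^2*r^10 := mul_nonneg (mul_nonneg (by norm_num) (pow_nonneg hx 2)) (pow_nonneg hr.le 10)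
  have g20 : (0:ℝ) ≤ (76632)*x^2*r^12 := mul_nonneg (mul_nonneg (by norm_num) (pow_nonneg hx 2)) (pow_nonneg hr.le 12)
  have g21 : (0:ℝ) ≤ (3852)*x^2*r^14 := mul_nonneg (mul_nonneg (by norm_num) (pow_nonneg hx 2)) (pow_nonneg hr.le 14)
  have g22 : (0:ℝ) ≤ (6000)*x^3*r^0 := mul_nonneg (mul_nonneg (by norm_num) (pow_nonneg hx 3)) (pow_nonneg hr.le 0)
  have g23 : (0:ℝ) ≤ (253680)*x^3*r^2 := mul_nonneg (mul_nonneg (by norm_num) (pow_nonneg hx 3)) (pow_nonneg hr.le 2)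
  have g24 : (0:ℝ) ≤ (1488088)*x^3*r^4 := mul_nonneg (mul_nonneg (by norm_num) (pow_nonneg hx 3)) (pow_nonneg hr.le 4)
  have g25 : (0:ℝ) ≤ (2563808)*x^3*r^6 := mul_nonneg (mul_nonneg (by norm_num) (pow_nonneg hx 3)) (pow_nonneg hr.le 6)
  have g26 : (0:ℝ) ≤ (1657256)*x^3*r^8 := mul_nonneg (mul_nonneg (by norm_num) (pow_nonneg hx 3)) (pow_nonneg hr.le 8)
  have g27 : (0:ℝ) ≤ (420672)*x^3*r^10 := mul_nonneg (mul_nonneg (by norm_num) (pow_nonneg hx 3)) (pow_nonneg hr.le 10)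
  have g28 : (0:ℝ) ≤ (38856)*x^3*r^12 := mul_nonneg (mul_nonneg (by norm_num) (pow_nonneg hx 3)) (pow_nonneg hr.le 12)
  have g29 : (0:ℝ) ≤ (864)*x^3*r^14 := mul_nonneg (mul_nonneg (by norm_num) (pow_nonneg hx 3)) (pow_nonneg hr.le 14)
  have g30 : (0:ℝ) ≤ (45200)*x^4*r^0 := mul_nonneg (mul_nonneg (by norm_num) (pow_nonneg hx 4)) (pow_nonneg hr.le 0)
  have g31 : (0:ℝ) ≤ (743696)*x^4*r^2 := mul_nonneg (mul_nonneg (by norm_num) (pow_nonneg hx 4)) (pow_nonneg hr.le 2)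
  have g32 : (0:ℝ) ≤ (2494368)*x^4*r^4 := mul_nonneg (mul_nonneg (by norm_num) (pow_nonneg hx 4)) (pow_nonneg hr.le 4)
  have g33 : (0:ℝ) ≤ (2731280)*x^4*r^6 := mul_nonneg (mul_nonneg (by norm_num) (pow_nonneg hx 4)) (pow_nonneg hr.le 6)
  have g34 : (0:ℝ) ≤ (1126576)*x^4*r^8 := mul_nonneg (mul_nonneg (by norm_num) (pow_nonneg hx 4)) (pow_nonneg hr.le 8)
  have g35 : (0:ℝ) ≤ (170032)*x^4*r^10 := mul_nonneg (mul_nonneg (by norm_num) (pow_nonneg hx 4)) (pow_nonneg hr.le 10)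
  have g36 : (0:ℝ) ≤ (7344)*x^4*r^12 := mul_nonneg (mul_nonneg (by norm_num) (pow_nonneg hx 4)) (pow_nonneg hr.le 12)
  have g37 : (0:ℝ) ≤ (132480)*x^5*r^0 := mul_nonneg (mul_nonneg (by norm_num) (pow_nonneg hx 5)) (pow_nonneg hr.le 0)
  have g38 : (0:ℝ) ≤ (1129088)*x^5*r^2 := mul_nonneg (mul_nonneg (by norm_num) (pow_nonneg hx 5)) (pow_nonneg hr.le 2)
  have g39 : (0:ℝ) ≤ (2271648)*x^5*r^4 := mul_nonneg (mul_nonneg (by norm_num) (pow_nonneg hx 5)) (pow_nonneg hr.le 4)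
  have g40 : (0:ℝ) ≤ (1541664)*x^5*r^6 := mul_nonneg (mul_nonneg (by norm_num) (pow_nonneg hx 5)) (pow_nonneg hr.le 6)
  have g41 : (0:ℝ) ≤ (368960)*x^5*r^8 := mul_nonneg (mul_nonneg (by norm_num) (pow_nonneg hx 5)) (pow_nonneg hr.le 8)
  have g42 : (0:ℝ) ≤ (25344)*x^5*r^10 := mul_nonneg (mul_nonneg (by norm_num) (pow_nonneg hx 5)) (pow_nonneg hr.le 10)
  have g43 : (0:ℝ) ≤ (191424)*x^6*r^0 := mul_nonneg (mul_nonneg (by norm_num) (pow_nonneg hx 6)) (pow_nonneg hr.le 0)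
  have g44 : (0:ℝ) ≤ (921600)*x^6*r^2 := mul_nonneg (mul_nonneg (by norm_num) (pow_nonneg hx 6)) (pow_nonneg hr.le 2)
  have g45 : (0:ℝ) ≤ (1114624)*x^6*r^4 := mul_nonneg (mul_nonneg (by norm_num) (pow_nonneg hx 6)) (pow_nonneg hr.le 4)
  have g46 : (0:ℝ) ≤ (430400)*x^6*r^6 := mul_nonneg (mul_nonneg (by norm_num) (pow_nonneg hx 6)) (pow_nonneg hr.le 6)
  have g47 : (0:ℝ) ≤ (45760)*x^6*r^8 := mul_nonneg (mul_nonneg (by norm_num) (pow_nonneg hx 6)) (pow_nonneg hr.le 8)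
  have g48 : (0:ℝ) ≤ (145152)*x^7*r^0 := mul_nonneg (mul_nonneg (by norm_num) (pow_nonneg hx 7)) (pow_nonneg hr.le 0)
  have g49 : (0:ℝ) ≤ (406784)*x^7*r^2 := mul_nonneg (mul_nonneg (by norm_num) (pow_nonneg hx 7)) (pow_nonneg hr.le 2)
  have g50 : (0:ℝ) ≤ (275584)*x^7*r^4 := mul_nonneg (mul_nonneg (by norm_num) (pow_nonneg hx 7)) (pow_nonneg hr.le 4)
  have g51 : (0:ℝ) ≤ (46592)*x^7*r^6 := mul_nonneg (mul_nonneg (by norm_num) (pow_nonneg hx 7)) (pow_nonneg hr.le 6)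
  have g52 : (0:ℝ) ≤ (59136)*x^8*r^0 := mul_nonneg (mul_nonneg (by norm_num) (pow_nonneg hx 8)) (pow_nonneg hr.le 0)
  have g53 : (0:ℝ) ≤ (91392)*x^8*r^2 := mul_nonneg (mul_nonneg (by norm_num) (pow_nonneg hx 8)) (pow_nonneg hr.le 2)
  have g54 : (0:ℝ) ≤ (26880)*x^8*r^4 := mul_nonneg (mul_nonneg (by norm_num) (pow_nonneg hx 8)) (pow_nonneg hr.le 4)
  have g55 : (0:ℝ) ≤ (12288)*x^9*r^0 := mul_nonneg (mul_nonneg (by norm_num) (pow_nonneg hx 9)) (pow_nonneg hr.le 0)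
  have g56 : (0:ℝ) ≤ (8192)*x^9*r^2 := mul_nonneg (mul_nonneg (by norm_num) (pow_nonneg hx 9)) (pow_nonneg hr.le 2)
  have g57 : (0:ℝ) ≤ (1024)*x^10*r^0 := mul_nonneg (mul_nonneg (by norm_num) (pow_nonneg hx 10)) (pow_nonneg hr.le 0)
  linarith [g0, g1, g2, g3, g4, g5, g6, g7, g8, g9, g10, g11, g12, g13, g14, g15, g16, g17, g18, g19, g20, g21, g22, g23, g24, g25, g26, g27, g28, g29, g30, g31, g32, g33, g34, g35, g36, g37, g38, g39, g40, g41, g42, g43, g44, g45, g46, g47, g48, g49, g50, g51, g52, g53, g54, g55, g56, g57]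

private lemma root_re_neg (r : ℝ) (hr : 0 < r) (y : ℂ)
    (hy : y^5 + ((4*r^2+6 : ℝ) : ℂ) * y^4 + ((3*r^4+23*r^2+5 : ℝ) : ℂ) * y^3
          + ((11*r^4+28*r^2 : ℝ) : ℂ) * y^2 + ((3*r^6+19*r^4+10*r^2 : ℝ) : ℂ) * y
          + ((r^6+5*r^4 : ℝ) : ℂ) = 0) : y.re < 0 := by
  by_contra hcon
  push_neg at hcon
  set x := y.re with hxdef
  set t := y.im with htdef
  have hy' : y = (x : ℂ) + (t : ℂ) * Complex.I := (Complex.re_add_im y).symm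
  rw [hy'] at hy
  have hre := congrArg Complex.re hy
  have him := congrArg Complex.im hy
  simp only [pow_succ, pow_zero, one_mul, Complex.add_re, Complex.add_im, Complex.mul_re,
    Complex.mul_im, Complex.ofReal_re, Complex.ofReal_im, Complex.I_re, Complex.I_im,
    Complex.zero_re, Complex.zero_im] at hre him
  have hRE : x^5-10*x^3*t^2+5*x*t^4 + (4*r^2+6)*(x^4-6*x^2*t^2+t^4) + (3*r^4+23*r^2+5)*(x^3-3*x*t^2) + (11*r^4+28*r^2)*(x^2-t^2) + (3*r^6+19*r^4+10*r^2)*x + (r^6+5*r^4) = 0 := by linear_combination hre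
  have hIM : t * (5*x^4-10*x^2*t^2+t^4 + (4*r^2+6)*(4*x^3-4*x*t^2) + (3*r^4+23*r^2+5)*(3*x^2-t^2) + (11*r^4+28*r^2)*(2*x) + (3*r^6+19*r^4+10*r^2)) = 0 := by linear_combination him
  rcases mul_eq_zero.mp hIM with ht | hQ
  · rw [ht] at hRE
    have f1 : (0:ℝ) ≤ x^5 := pow_nonneg hcon 5
    have f2 : (0:ℝ) ≤ (4*r^2+6)*x^4 := mul_nonneg (by positivity) (pow_nonneg hcon 4)
    have f3 : (0:ℝ) ≤ (3*r^4+23*r^2+5)*x^3 := mul_nonneg (by positivity) (pow_nonneg hcon 3)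
    have f4 : (0:ℝ) ≤ (11*r^4+28*r^2)*x^2 := mul_nonneg (by positivity) (pow_nonneg hcon 2)
    have f5 : (0:ℝ) ≤ (3*r^6+19*r^4+10*r^2)*x := mul_nonneg (by positivity) hcon
    have f6 : (0:ℝ) < r^6+5*r^4 := by have := pow_pos hr 6; have := pow_pos hr 4; linarith
    nlinarith [hRE, f1, f2, f3, f4, f5, f6]
  · exact real_elim r x t hr hcon hRE hQ

/-- **Spectral gap in the medium-frequency regime** (Lemma 3.3, (3.77)): for
`0 < r₀ ≤ R₀` there is `c₀ > 0` such that for all `r ∈ [r₀, R₀]`, every complex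
root `y` of the characteristic quintic of `ℬ(r)` (equivalently, every eigenvalue
of `ℬ(r)`) satisfies `Re y ≤ −c₀`. -/
theorem spectral_gap_medium_frequency (r₀ R₀ : ℝ) (h₀ : 0 < r₀) (hle : r₀ ≤ R₀) :
    ∃ c₀ : ℝ, 0 < c₀ ∧ ∀ r : ℝ, r₀ ≤ r → r ≤ R₀ → ∀ y : ℂ,
      y^5 + ((4*r^2+6 : ℝ) : ℂ) * y^4 + ((3*r^4+23*r^2+5 : ℝ) : ℂ) * y^3
          + ((11*r^4+28*r^2 : ℝ) : ℂ) * y^2 + ((3*r^6+19*r^4+10*r^2 : ℝ) : ℂ) * y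
          + ((r^6+5*r^4 : ℝ) : ℂ) = 0 →
      y.re ≤ -c₀ := by
  classical
  set S : Set (ℝ × ℂ) := {p : ℝ × ℂ | p.1 ∈ Set.Icc r₀ R₀ ∧
      p.2^5 + ((4*p.1^2+6 : ℝ) : ℂ) * p.2^4 + ((3*p.1^4+23*p.1^2+5 : ℝ) : ℂ) * p.2^3
        + ((11*p.1^4+28*p.1^2 : ℝ) : ℂ) * p.2^2 + ((3*p.1^6+19*p.1^4+10*p.1^2 : ℝ) : ℂ) * p.2
        + ((p.1^6+5*p.1^4 : ℝ) : ℂ) = 0} with hSdef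
  by_cases hne : S.Nonempty
  · have hR0 : 0 < R₀ := lt_of_lt_of_le h₀ hle
    set M : ℝ := 1 + ((4*R₀^2+6) + (3*R₀^4+23*R₀^2+5) + (11*R₀^4+28*R₀^2)
        + (3*R₀^6+19*R₀^4+10*R₀^2) + (R₀^6+5*R₀^4)) with hMdef
    have hM1 : (1:ℝ) ≤ M := by
      have : (0:ℝ) ≤ (4*R₀^2+6) + (3*R₀^4+23*R₀^2+5) + (11*R₀^4+28*R₀^2)
        + (3*R₀^6+19*R₀^4+10*R₀^2) + (R₀^6+5*R₀^4) := by positivity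
      linarith
    have hbound : ∀ p ∈ S, ‖p.2‖ ≤ M := by
      rintro ⟨r, y⟩ ⟨⟨hr1, hr2⟩, heq⟩
      dsimp only at hr1 hr2 heq
      by_contra hb
      push_neg at hb
      dsimp only at hb
      have hrpos : 0 < r := lt_of_lt_of_le h₀ hr1
      have h1y : (1:ℝ) ≤ ‖y‖ := le_trans hM1 hb.le
      have h5 : y^5 = -(((4*r^2+6 : ℝ) : ℂ) * y^4 + ((3*r^4+23*r^2+5 : ℝ) : ℂ) * y^3
          + ((11*r^4+28*r^2 : ℝ) : ℂ) * y^2 + ((3*r^6+19*r^4+10*r^2 : ℝ) : ℂ) * y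
          + ((r^6+5*r^4 : ℝ) : ℂ)) := by linear_combination heq
      have hr2' : r^2 ≤ R₀^2 := pow_le_pow_left₀ hrpos.le hr2 2
      have hr4' : r^4 ≤ R₀^4 := pow_le_pow_left₀ hrpos.le hr2 4
      have hr6' : r^6 ≤ R₀^6 := pow_le_pow_left₀ hrpos.le hr2 6
      have p1 : ‖y‖^1 ≤ ‖y‖^4 := pow_le_pow_right₀ h1y (by norm_num)
      have p2 : ‖y‖^2 ≤ ‖y‖^4 := pow_le_pow_right₀ h1y (by norm_num)
      have p3 : ‖y‖^3 ≤ ‖y‖^4 := pow_le_pow_right₀ h1y (by norm_num)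
      have p0 : (1:ℝ) ≤ ‖y‖^4 := by calc (1:ℝ) = 1^4 := by norm_num
                                          _ ≤ ‖y‖^4 := by gcongr
      have e4 : ‖((4*r^2+6 : ℝ) : ℂ) * y^4‖ ≤ (4*R₀^2+6) * ‖y‖^4 := by
        rw [norm_mul, Complex.norm_real, Real.norm_eq_abs, norm_pow, abs_of_nonneg (by positivity)]
        exact mul_le_mul_of_nonneg_right (by linarith) (pow_nonneg (norm_nonneg y) 4)
      have e3 : ‖((3*r^4+23*r^2+5 : ℝ) : ℂ) * y^3‖ ≤ (3*R₀^4+23*R₀^2+5) * ‖y‖^4 := by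
        rw [norm_mul, Complex.norm_real, Real.norm_eq_abs, norm_pow, abs_of_nonneg (by positivity)]
        calc (3*r^4+23*r^2+5) * ‖y‖^3 ≤ (3*R₀^4+23*R₀^2+5) * ‖y‖^3 :=
              mul_le_mul_of_nonneg_right (by linarith) (pow_nonneg (norm_nonneg y) 3)
          _ ≤ (3*R₀^4+23*R₀^2+5) * ‖y‖^4 :=
              mul_le_mul_of_nonneg_left p3 (by positivity)
      have e2 : ‖((11*r^4+28*r^2 : ℝ) : ℂ) * y^2‖ ≤ (11*R₀^4+28*R₀^2) * ‖y‖^4 := by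
        rw [norm_mul, Complex.norm_real, Real.norm_eq_abs, norm_pow, abs_of_nonneg (by positivity)]
        calc (11*r^4+28*r^2) * ‖y‖^2 ≤ (11*R₀^4+28*R₀^2) * ‖y‖^2 :=
              mul_le_mul_of_nonneg_right (by linarith) (pow_nonneg (norm_nonneg y) 2)
          _ ≤ (11*R₀^4+28*R₀^2) * ‖y‖^4 :=
              mul_le_mul_of_nonneg_left p2 (by positivity)
      have e1 : ‖((3*r^6+19*r^4+10*r^2 : ℝ) : ℂ) * y‖ ≤ (3*R₀^6+19*R₀^4+10*R₀^2) * ‖y‖^4 := by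
        rw [norm_mul, Complex.norm_real, Real.norm_eq_abs, abs_of_nonneg (by positivity)]
        calc (3*r^6+19*r^4+10*r^2) * ‖y‖ ≤ (3*R₀^6+19*R₀^4+10*R₀^2) * ‖y‖ :=
              mul_le_mul_of_nonneg_right (by linarith) (norm_nonneg y)
          _ = (3*R₀^6+19*R₀^4+10*R₀^2) * ‖y‖^1 := by ring
          _ ≤ (3*R₀^6+19*R₀^4+10*R₀^2) * ‖y‖^4 :=
              mul_le_mul_of_nonneg_left p1 (by positivity)
      have e0 : ‖((r^6+5*r^4 : ℝ) : ℂ)‖ ≤ (R₀^6+5*R₀^4) * ‖y‖^4 := by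
        rw [Complex.norm_real, Real.norm_eq_abs, abs_of_nonneg (by positivity)]
        calc (r^6+5*r^4) ≤ (R₀^6+5*R₀^4) * 1 := by nlinarith
          _ ≤ (R₀^6+5*R₀^4) * ‖y‖^4 := mul_le_mul_of_nonneg_left p0 (by positivity)
      have hnorm : ‖y‖^5 ≤ (M-1) * ‖y‖^4 := by
        have step : ‖y‖^5 = ‖(((4*r^2+6 : ℝ) : ℂ) * y^4 + ((3*r^4+23*r^2+5 : ℝ) : ℂ) * y^3
          + ((11*r^4+28*r^2 : ℝ) : ℂ) * y^2 + ((3*r^6+19*r^4+10*r^2 : ℝ) : ℂ) * y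
          + ((r^6+5*r^4 : ℝ) : ℂ))‖ := by
          rw [← norm_pow, h5, norm_neg]
        have t1 := norm_add_le (((4*r^2+6 : ℝ) : ℂ) * y^4 + ((3*r^4+23*r^2+5 : ℝ) : ℂ) * y^3
          + ((11*r^4+28*r^2 : ℝ) : ℂ) * y^2 + ((3*r^6+19*r^4+10*r^2 : ℝ) : ℂ) * y)
          (((r^6+5*r^4 : ℝ) : ℂ))
        have t2 := norm_add_le (((4*r^2+6 : ℝ) : ℂ) * y^4 + ((3*r^4+23*r^2+5 : ℝ) : ℂ) * y^3
          + ((11*r^4+28*r^2 : ℝ) : ℂ) * y^2) (((3*r^6+19*r^4+10*r^2 : ℝ) : ℂ) * y)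
        have t3 := norm_add_le (((4*r^2+6 : ℝ) : ℂ) * y^4 + ((3*r^4+23*r^2+5 : ℝ) : ℂ) * y^3)
          (((11*r^4+28*r^2 : ℝ) : ℂ) * y^2)
        have t4 := norm_add_le (((4*r^2+6 : ℝ) : ℂ) * y^4) (((3*r^4+23*r^2+5 : ℝ) : ℂ) * y^3)
        rw [step]
        simp only [hMdef]
        linarith [e4, e3, e2, e1, e0]
      have hy4 : (0:ℝ) < ‖y‖^4 := by positivity
      nlinarith [hnorm, mul_lt_mul_of_pos_right hb hy4, p0]
    have hclosed : IsClosed S := by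
      have h1 : IsClosed {p : ℝ × ℂ | p.1 ∈ Set.Icc r₀ R₀} :=
        isClosed_Icc.preimage continuous_fst
      have h2 : IsClosed {p : ℝ × ℂ |
          p.2^5 + ((4*p.1^2+6 : ℝ) : ℂ) * p.2^4 + ((3*p.1^4+23*p.1^2+5 : ℝ) : ℂ) * p.2^3
          + ((11*p.1^4+28*p.1^2 : ℝ) : ℂ) * p.2^2 + ((3*p.1^6+19*p.1^4+10*p.1^2 : ℝ) : ℂ) * p.2
          + ((p.1^6+5*p.1^4 : ℝ) : ℂ) = 0} := by
        apply isClosed_eq _ continuous_const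
        fun_prop
      exact h1.inter h2
    have hcomp : IsCompact S := by
      apply IsCompact.of_isClosed_subset
        ((isCompact_Icc).prod (isCompact_closedBall (0:ℂ) M)) hclosed
      rintro ⟨r, y⟩ hp
      exact ⟨hp.1, by simpa [Metric.mem_closedBall, dist_zero_right] using hbound (r,y) hp⟩
    obtain ⟨q, hqS, hqmax⟩ := hcomp.exists_isMaxOn hne
      ((Complex.continuous_re.comp continuous_snd).continuousOn)
    have hqneg : q.2.re < 0 := root_re_neg q.1 (lt_of_lt_of_le h₀ hqS.1.1) q.2 hqS.2
    refine ⟨-q.2.re, by linarith, ?_⟩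
    intro r hr1 hr2 y hy
    have hyS : (r, y) ∈ S := ⟨⟨hr1, hr2⟩, hy⟩
    have := hqmax hyS
    simpa using this
  · refine ⟨1, one_pos, ?_⟩
    intro r hr1 hr2 y hy
    exact absurd ⟨(r, y), ⟨⟨hr1, hr2⟩, hy⟩⟩ hne
end
end
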